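/- For every integer m ≥ 2, ∑_{k=-m}^{m} ( [2m-1 choose m-k-1]_q + [2m-1 choose m-k]_q ) · [k]^2 = 4 ([2m-1] + 1) ∏_{j=1}^{m-2} (q^j + q^{-j})^2 in ℚ(q), where the empty product (for m = 2) equals 1, and binomial coefficients with argument outside [0, 2m-1] are interpreted as 0. -/

import Mathlib

noncomputable def q : RatFunc ℚ := RatFunc.X

noncomputable def qint (k : ℤ) : RatFunc ℚ := (q ^ k - q ^ (-k)) / (q - q⁻¹)

noncomputable def qfact (m : ℕ) : RatFunc ℚ := ∏ i ∈ Finset.range m, qint (i + 1)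

noncomputable def qbinom (m : ℕ) (k : ℤ) : RatFunc ℚ :=
  if 0 ≤ k ∧ k ≤ (m : ℤ) then qfact m / (qfact k.toNat * qfact (m - k.toNat)) else 0

/-!
Since `[k]² (q - q⁻¹)² = q^{2k} + q^{-2k} - 2`, the left-hand side times `(q - q⁻¹)²` is a
combination of the values at `t = q^{-2}, q², 1` of `∑ⱼ ([N choose j-1] + [N choose j]) tʲ`,
`N = 2m - 1`, which by the q-binomial theorem equals `(1 + t) ∏_{i<N} (1 + q^{2i+1-N} t)`.
Because `N` is odd, the product at `t = 1` is the symmetric product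
`∏_{|a| ≤ m-1} (1 + q^{2a}) = 2 ∏_{j ≤ m-1} (q^j + q^{-j})²`, and at `t = q^{±2}` it is the
symmetric product for `m - 2` times two boundary factors. What remains is an identity between
Laurent polynomials in `q` and `q^m`.
-/

open Finset

lemma q_ne_zero : q ≠ 0 := RatFunc.X_ne_zero

lemma intDegree_q_zpow (k : ℤ) : (q ^ k).intDegree = k := by
  induction k using Int.induction_on with
  | zero => simp
  | succ n ih =>
    rw [zpow_add_one₀ q_ne_zero, RatFunc.intDegree_mul (zpow_ne_zero _ q_ne_zero) q_ne_zero, ih,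
      q, RatFunc.intDegree_X]
  | pred n ih =>
    rw [zpow_sub_one₀ q_ne_zero, RatFunc.intDegree_mul (zpow_ne_zero _ q_ne_zero)
      (inv_ne_zero q_ne_zero), ih, RatFunc.intDegree_inv, q, RatFunc.intDegree_X, sub_eq_add_neg]

lemma q_zpow_injective : Function.Injective (q ^ · : ℤ → RatFunc ℚ) := fun a b h => by
  simpa only [intDegree_q_zpow] using congrArg RatFunc.intDegree h

lemma q_sub_q_inv_ne_zero : q - q⁻¹ ≠ 0 := fun h => by
  have := @q_zpow_injective 1 (-1) (by simpa [sub_eq_zero] using h)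
  omega

lemma qint_ne_zero {k : ℤ} (hk : k ≠ 0) : qint k ≠ 0 := by
  refine div_ne_zero (fun h => hk ?_) q_sub_q_inv_ne_zero
  have := q_zpow_injective (sub_eq_zero.1 h)
  omega

lemma qint_add (a b : ℤ) : qint (a + b) = q ^ b * qint a + q ^ (-a) * qint b := by
  simp only [qint, neg_add, zpow_add₀ q_ne_zero]
  ring

lemma qint_sq_mul (k : ℤ) : qint k ^ 2 * (q - q⁻¹) ^ 2 = q ^ (2 * k) + q ^ (-(2 * k)) - 2 := by
  have hk : q ^ k * q ^ (-k) = 1 := by rw [← zpow_add₀ q_ne_zero, add_neg_cancel, zpow_zero]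
  rw [qint, div_pow, div_mul_cancel₀ _ (pow_ne_zero 2 q_sub_q_inv_ne_zero), two_mul, neg_add,
    zpow_add₀ q_ne_zero, zpow_add₀ q_ne_zero]
  linear_combination (-2 : RatFunc ℚ) * hk

lemma qfact_zero : qfact 0 = 1 := prod_range_zero _

lemma qfact_succ (n : ℕ) : qfact (n + 1) = qfact n * qint (n + 1) := prod_range_succ _ _

lemma qfact_ne_zero (n : ℕ) : qfact n ≠ 0 :=
  prod_ne_zero_iff.2 fun i _ => qint_ne_zero (by omega)

lemma qbinom_of_lt_zero {n : ℕ} {k : ℤ} (hk : k < 0) : qbinom n k = 0 :=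
  if_neg (by omega)

lemma qbinom_of_lt {n : ℕ} {k : ℤ} (hk : n < k) : qbinom n k = 0 :=
  if_neg (by omega)

lemma qbinom_of_add_eq {a b n : ℕ} (h : a + b = n) :
    qbinom n a = qfact n / (qfact a * qfact b) := by
  rw [qbinom, if_pos (by omega), Int.toNat_natCast, ← h, Nat.add_sub_cancel_left]

lemma qbinom_zero (n : ℕ) : qbinom n 0 = 1 := by
  simpa [qfact_zero, qfact_ne_zero] using qbinom_of_add_eq (zero_add n)

lemma qbinom_self (n : ℕ) : qbinom n n = 1 := by
  simpa [qfact_zero, qfact_ne_zero] using qbinom_of_add_eq (add_zero n)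

lemma qbinom_succ_of_pos_of_le {n : ℕ} {k : ℤ} (hk : 0 < k) (hkn : k ≤ n) :
    qbinom (n + 1) k = q ^ k * qbinom n k + q ^ (k - (n + 1)) * qbinom n (k - 1) := by
  obtain ⟨a, b, rfl, hn⟩ : ∃ a b : ℕ, k = (a + 1 : ℕ) ∧ a + 1 + b = n :=
    ⟨k.toNat - 1, n - k.toNat, by omega, by omega⟩
  rw [Nat.cast_succ, add_sub_cancel_right, ← Nat.cast_succ,
    qbinom_of_add_eq (show a + 1 + (b + 1) = n + 1 by omega), qbinom_of_add_eq hn,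
    qbinom_of_add_eq (show a + (b + 1) = n by omega), qfact_succ n, qfact_succ a, qfact_succ b,
    show (n : ℤ) + 1 = (b + 1 : ℤ) + (a + 1) by omega, qint_add,
    show ((a + 1 : ℕ) : ℤ) - ((b + 1 : ℤ) + (a + 1)) = -(b + 1) by omega]
  have := qfact_ne_zero a
  have := qfact_ne_zero b
  have := qint_ne_zero (show (a + 1 : ℤ) ≠ 0 by omega)
  have := qint_ne_zero (show (b + 1 : ℤ) ≠ 0 by omega)
  push_cast
  field_simp

lemma qbinom_succ (n : ℕ) (k : ℤ) :
    qbinom (n + 1) k = q ^ k * qbinom n k + q ^ (k - (n + 1)) * qbinom n (k - 1) := by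
  rcases lt_or_ge k 0 with hk | hk
  · simp [qbinom_of_lt_zero, hk, show k - 1 < 0 by omega]
  rcases hk.eq_or_lt with rfl | hk
  · simp [qbinom_zero, qbinom_of_lt_zero]
  rcases le_or_gt k n with hkn | hkn
  · exact qbinom_succ_of_pos_of_le hk hkn
  rcases (Int.add_one_le_of_lt hkn).eq_or_lt with rfl | hkn
  · rw [← Nat.cast_succ, qbinom_self, qbinom_of_lt (by omega), Nat.cast_succ,
      add_sub_cancel_right, qbinom_self]
    simp
  · simp [qbinom_of_lt, hkn, show (n : ℤ) < k by omega, show (n : ℤ) < k - 1 by omega]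

theorem sum_range_qbinom_mul_pow (n : ℕ) (t : RatFunc ℚ) :
    ∑ j ∈ range (n + 1), qbinom n j * t ^ j =
      ∏ i ∈ range n, (1 + q ^ (2 * (i : ℤ) + 1 - n) * t) := by
  induction n generalizing t with
  | zero => simp [qbinom_zero]
  | succ n ih =>
    have hlow : ∑ j ∈ range (n + 2), q ^ (j : ℤ) * qbinom n j * t ^ j =
        ∑ j ∈ range (n + 1), qbinom n j * (q * t) ^ j := by
      rw [sum_range_succ, qbinom_of_lt (by omega), mul_zero, zero_mul, add_zero]
      refine sum_congr rfl fun j _ => ?_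
      rw [zpow_natCast]
      ring
    have hhigh : ∑ j ∈ range (n + 2), q ^ ((j : ℤ) - (n + 1)) * qbinom n (j - 1) * t ^ j =
        q ^ (-(n : ℤ)) * t * ∑ j ∈ range (n + 1), qbinom n j * (q * t) ^ j := by
      rw [sum_range_succ', Nat.cast_zero, zero_sub, qbinom_of_lt_zero (by omega), mul_zero,
        zero_mul, add_zero, mul_sum]
      refine sum_congr rfl fun j _ => ?_
      rw [show ((j + 1 : ℕ) : ℤ) - (n + 1) = -n + j by push_cast; ring, Nat.cast_succ,
        add_sub_cancel_right, zpow_add₀ q_ne_zero, zpow_natCast]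
      ring
    have hfactor : ∀ i ∈ range n, 1 + q ^ (2 * ((i + 1 : ℕ) : ℤ) + 1 - (n + 1 : ℕ)) * t =
        1 + q ^ (2 * (i : ℤ) + 1 - n) * (q * t) := fun i _ => by
      rw [show 2 * ((i + 1 : ℕ) : ℤ) + 1 - (n + 1 : ℕ) = 2 * (i : ℤ) + 1 - n + 1 by
          push_cast; ring, zpow_add_one₀ q_ne_zero]
      ring
    calc ∑ j ∈ range (n + 1 + 1), qbinom (n + 1) j * t ^ j
        = ∑ j ∈ range (n + 2), (q ^ (j : ℤ) * qbinom n j * t ^ j +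
            q ^ ((j : ℤ) - (n + 1)) * qbinom n (j - 1) * t ^ j) := by
          simp only [qbinom_succ, add_mul]
      _ = (1 + q ^ (-(n : ℤ)) * t) * ∑ j ∈ range (n + 1), qbinom n j * (q * t) ^ j := by
          rw [sum_add_distrib, hlow, hhigh]
          ring
      _ = ∏ i ∈ range (n + 1), (1 + q ^ (2 * (i : ℤ) + 1 - (n + 1 : ℕ)) * t) := by
          rw [ih, prod_range_succ', prod_congr rfl hfactor,
            show 2 * ((0 : ℕ) : ℤ) + 1 - (n + 1 : ℕ) = -n by push_cast; ring]
          ring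

lemma sum_range_qbinom_sub_one_add_qbinom_mul_pow (n : ℕ) (t : RatFunc ℚ) :
    ∑ j ∈ range (n + 2), (qbinom n (j - 1) + qbinom n j) * t ^ j =
      (1 + t) * ∏ i ∈ range n, (1 + q ^ (2 * (i : ℤ) + 1 - n) * t) := by
  have hshift : ∑ j ∈ range (n + 2), qbinom n (j - 1) * t ^ j =
      t * ∑ j ∈ range (n + 1), qbinom n j * t ^ j := by
    rw [sum_range_succ', Nat.cast_zero, zero_sub, qbinom_of_lt_zero (by omega), zero_mul,
      add_zero, mul_sum]
    refine sum_congr rfl fun j _ => ?_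
    rw [Nat.cast_succ, add_sub_cancel_right, pow_succ]
    ring
  have htop : ∑ j ∈ range (n + 2), qbinom n j * t ^ j =
      ∑ j ∈ range (n + 1), qbinom n j * t ^ j := by
    rw [sum_range_succ, qbinom_of_lt (by omega), zero_mul, add_zero]
  simp only [add_mul, sum_add_distrib, hshift, htop, sum_range_qbinom_mul_pow]
  ring

lemma sum_mul_qint_sub_sq (s : Finset ℕ) (w : ℕ → RatFunc ℚ) (c : ℤ) :
    (∑ j ∈ s, w j * qint (c - j) ^ 2) * (q - q⁻¹) ^ 2 =
      q ^ (2 * c) * ∑ j ∈ s, w j * (q ^ (-2 : ℤ)) ^ j +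
        q ^ (-(2 * c)) * ∑ j ∈ s, w j * (q ^ (2 : ℤ)) ^ j - 2 * ∑ j ∈ s, w j := by
  simp only [sum_mul, mul_sum, ← sum_add_distrib, ← sum_sub_distrib]
  refine sum_congr rfl fun j _ => ?_
  rw [mul_assoc, qint_sq_mul, show -(2 * (c - j)) = -(2 * c) + 2 * j by ring,
    show 2 * (c - j) = 2 * c + -2 * j by ring, zpow_add₀ q_ne_zero, zpow_add₀ q_ne_zero,
    zpow_mul q (-2) j, zpow_mul q 2 j, zpow_natCast, zpow_natCast]
  ring

lemma sum_Icc_neg_eq_sum_range {M : Type*} [AddCommMonoid M] (f : ℤ → M) (m : ℕ) :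
    ∑ k ∈ Icc (-(m : ℤ)) m, f k = ∑ j ∈ range (2 * m + 1), f (m - j) := by
  refine sum_nbij' (fun k => (m - k).toNat) (fun j => m - j) ?_ ?_ ?_ ?_ ?_ <;>
    intro a ha <;> simp only [mem_Icc, mem_range] at ha ⊢ <;>
    first | omega | (congr 1; omega)

section SymmetricProducts

variable {K : Type*} [Field K] {x : K}

lemma one_add_zpow_two_mul_mul_one_add_zpow_neg (hx : x ≠ 0) (c : ℤ) :
    (1 + x ^ (2 * c)) * (1 + x ^ (-(2 * c))) = (x ^ c + x ^ (-c)) ^ 2 := by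
  have h : x ^ c * x ^ (-c) = 1 := by rw [← zpow_add₀ hx, add_neg_cancel, zpow_zero]
  rw [two_mul, neg_add, zpow_add₀ hx, zpow_add₀ hx]
  linear_combination (x ^ c * x ^ (-c) - 1) * h

lemma prod_range_one_add_zpow_two_mul_sub (hx : x ≠ 0) (r : ℕ) :
    ∏ i ∈ range (2 * r + 1), (1 + x ^ (2 * ((i : ℤ) - r))) =
      2 * ∏ j ∈ Icc 1 r, (x ^ (j : ℤ) + x ^ (-(j : ℤ))) ^ 2 := by
  induction r with
  | zero => norm_num
  | succ r ih =>
    have hshift : ∀ i ∈ range (2 * r + 1),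
        1 + x ^ (2 * (((i + 1 : ℕ) : ℤ) - (r + 1 : ℕ))) = 1 + x ^ (2 * ((i : ℤ) - r)) :=
      fun i _ => by push_cast; ring_nf
    rw [show 2 * (r + 1) + 1 = 2 * r + 1 + 1 + 1 by ring, prod_range_succ, prod_range_succ',
      prod_congr rfl hshift, ih, prod_Icc_succ_top (by omega),
      ← one_add_zpow_two_mul_mul_one_add_zpow_neg hx]
    push_cast
    ring_nf

lemma prod_range_one_add_zpow_odd (hx : x ≠ 0) (r : ℕ) :
    ∏ i ∈ range (2 * r + 3), (1 + x ^ (2 * (i : ℤ) + 1 - (2 * r + 3 : ℕ))) =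
      2 * (∏ j ∈ Icc 1 r, (x ^ (j : ℤ) + x ^ (-(j : ℤ))) ^ 2) *
        (x ^ ((r : ℤ) + 1) + x ^ (-((r : ℤ) + 1))) ^ 2 := by
  rw [mul_assoc, show (r : ℤ) + 1 = (r + 1 : ℕ) by push_cast; rfl,
    ← prod_Icc_succ_top (by omega : 1 ≤ r + 1), ← prod_range_one_add_zpow_two_mul_sub hx]
  refine prod_congr rfl fun i _ => ?_
  push_cast
  ring_nf

lemma prod_range_one_add_zpow_odd_mul_zpow_two (hx : x ≠ 0) (r : ℕ) :
    ∏ i ∈ range (2 * r + 3), (1 + x ^ (2 * (i : ℤ) + 1 - (2 * r + 3 : ℕ)) * x ^ (2 : ℤ)) =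
      2 * (∏ j ∈ Icc 1 r, (x ^ (j : ℤ) + x ^ (-(j : ℤ))) ^ 2) *
        (1 + x ^ (2 * ((r : ℤ) + 1))) * (1 + x ^ (2 * ((r : ℤ) + 2))) := by
  have hfac : ∀ i : ℕ, x ^ (2 * (i : ℤ) + 1 - (2 * r + 3 : ℕ)) * x ^ (2 : ℤ) =
      x ^ (2 * ((i : ℤ) - r)) := fun i => by
    rw [← zpow_add₀ hx]; push_cast; ring_nf
  simp only [hfac]
  rw [prod_range_succ, prod_range_succ, prod_range_one_add_zpow_two_mul_sub hx]
  push_cast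
  ring_nf

lemma prod_range_one_add_zpow_odd_mul_zpow_neg_two (hx : x ≠ 0) (r : ℕ) :
    ∏ i ∈ range (2 * r + 3),
        (1 + x ^ (2 * (i : ℤ) + 1 - (2 * r + 3 : ℕ)) * x ^ (-2 : ℤ)) =
      2 * (∏ j ∈ Icc 1 r, (x ^ (j : ℤ) + x ^ (-(j : ℤ))) ^ 2) *
        (1 + x ^ (-(2 * ((r : ℤ) + 1)))) * (1 + x ^ (-(2 * ((r : ℤ) + 2)))) := by
  have hfac : ∀ i : ℕ, x ^ (2 * (i : ℤ) + 1 - (2 * r + 3 : ℕ)) * x ^ (-2 : ℤ) =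
      x ^ (2 * ((i : ℤ) - (r + 2))) := fun i => by
    rw [← zpow_add₀ hx]; push_cast; ring_nf
  have hshift : ∀ i : ℕ,
      x ^ (2 * (((i + 1 + 1 : ℕ) : ℤ) - (r + 2))) = x ^ (2 * ((i : ℤ) - r)) :=
    fun i => by push_cast; ring_nf
  simp only [hfac]
  rw [prod_range_succ', prod_range_succ']
  simp only [hshift]
  rw [prod_range_one_add_zpow_two_mul_sub hx]
  push_cast
  ring_nf

end SymmetricProducts

/-- Second moment identity:
`∑_{k=-m}^m ([2m-1 choose m-k-1]_q + [2m-1 choose m-k]_q)[k]² = 4([2m-1]+1)∏_{j=1}^{m-2}(q^j+q^{-j})²`. -/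
theorem qbinom_second_moment (m : ℕ) (hm : 2 ≤ m) :
    ∑ k ∈ Finset.Icc (-(m : ℤ)) (m : ℤ),
        (qbinom (2 * m - 1) ((m : ℤ) - k - 1) + qbinom (2 * m - 1) ((m : ℤ) - k)) * qint k ^ 2 =
      4 * (qint (2 * (m : ℤ) - 1) + 1) *
        ∏ j ∈ Finset.Icc 1 (m - 2), (q ^ (j : ℤ) + q ^ (-(j : ℤ))) ^ 2 := by
  obtain ⟨r, rfl⟩ : ∃ r, m = r + 2 := ⟨m - 2, by omega⟩
  have hgen := sum_range_qbinom_sub_one_add_qbinom_mul_pow (2 * r + 3)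
  have hgen_one := hgen 1
  simp only [one_pow, mul_one] at hgen_one
  apply mul_right_cancel₀ (pow_ne_zero 2 q_sub_q_inv_ne_zero)
  rw [sum_Icc_neg_eq_sum_range, show 2 * (r + 2) - 1 = 2 * r + 3 by omega,
    show 2 * (r + 2) + 1 = 2 * r + 3 + 2 by ring, Nat.add_sub_cancel]
  simp only [sub_sub_cancel]
  rw [sum_mul_qint_sub_sq, hgen, hgen, hgen_one, prod_range_one_add_zpow_odd q_ne_zero,
    prod_range_one_add_zpow_odd_mul_zpow_two q_ne_zero,
    prod_range_one_add_zpow_odd_mul_zpow_neg_two q_ne_zero, qint,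
    div_add_one q_sub_q_inv_ne_zero]
  push_cast
  simp only [zpow_add₀ q_ne_zero, zpow_sub₀ q_ne_zero, zpow_neg, zpow_mul, zpow_natCast, mul_add,
    neg_add]
  have hq := q_ne_zero
  field_simp
  ring
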